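/- For all m, n, p ∈ ℕ, partition Fin (m+n+p) into three consecutive blocks of sizes m, n, p, and let c_{m,n,p} be the F-linear endomorphism of V_{m+n+p} ⊗[F] V_{m+n+p} acting on pairs of basis vectors indexed in the same block as the correspondingly embedded β_m, β_n, β_p, and by the flip e_a ⊗ e_b ↦ e_b ⊗ e_a whenever a and b lie in different blocks. Then β_{m+n+p} = c_{m,n,p} + (q − q⁻¹) · P_>, where P_> is the endomorphism fixing each basis vector e_a ⊗ e_b with a and b in different blocks and a belonging to a strictly later block than b, and annihilating all other basis vectors. (This three-block crossing decomposition is the matrix specialization of the relation underlying the coassociativity of the Turaev coproduct Δ_f.) -/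

import Mathlib

open scoped TensorProduct

set_option synthInstance.maxHeartbeats 1000000
set_option maxHeartbeats 1000000
noncomputable section

abbrev F : Type := RatFunc ℂ

def q : F := RatFunc.X

abbrev V (N : ℕ) : Type := Fin N → F

def bV (N : ℕ) : Module.Basis (Fin N) F (V N) := Pi.basisFun F (Fin N)

def e {N : ℕ} (i : Fin N) : V N := bV N i

def bVV (N : ℕ) : Module.Basis (Fin N × Fin N) F (V N ⊗[F] V N) :=
  (bV N).tensorProduct (bV N)

/-- The HOMFLY R-matrix β_N. -/
def β (N : ℕ) : V N ⊗[F] V N →ₗ[F] V N ⊗[F] V N :=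
  (bVV N).constr F fun p =>
    if p.1 = p.2 then q • (e p.1 ⊗ₜ[F] e p.1)
    else if p.1 < p.2 then e p.2 ⊗ₜ[F] e p.1
    else e p.2 ⊗ₜ[F] e p.1 + (q - q⁻¹) • (e p.1 ⊗ₜ[F] e p.2)

/-- Linear inclusion induced by a map of index sets. -/
def emb {a N : ℕ} (f : Fin a → Fin N) : V a →ₗ[F] V N :=
  (bV a).constr F fun i => e (f i)

def ι₁ (m n : ℕ) : Fin m → Fin (m + n) := Fin.castAdd n
def ι₂ (m n : ℕ) : Fin n → Fin (m + n) := Fin.natAdd m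

/-- The Levi braiding c_{m,n}. -/
def levi (m n : ℕ) : V (m + n) ⊗[F] V (m + n) →ₗ[F] V (m + n) ⊗[F] V (m + n) :=
  (bVV (m + n)).constr F fun p =>
    if ha : (p.1 : ℕ) < m then
      if hb : (p.2 : ℕ) < m then
        TensorProduct.map (emb (ι₁ m n)) (emb (ι₁ m n))
          (β m (e ⟨p.1, ha⟩ ⊗ₜ[F] e ⟨p.2, hb⟩))
      else e p.2 ⊗ₜ[F] e p.1
    else
      if hb : (p.2 : ℕ) < m then e p.2 ⊗ₜ[F] e p.1
      else
        TensorProduct.map (emb (ι₂ m n)) (emb (ι₂ m n))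
          (β n (e ⟨(p.1 : ℕ) - m, by have := p.1.isLt; omega⟩ ⊗ₜ[F]
                e ⟨(p.2 : ℕ) - m, by have := p.2.isLt; omega⟩))

/-- Partial trace over the second tensor factor. -/
def ptr {N : ℕ} (Φ : V N ⊗[F] V N →ₗ[F] V N ⊗[F] V N) : V N →ₗ[F] V N :=
  (bV N).constr F fun i =>
    ∑ j : Fin N,
      (TensorProduct.rid F (V N))
        (TensorProduct.map LinearMap.id (LinearMap.proj j) (Φ (e i ⊗ₜ[F] e j)))

/-- Quantum integer [n]_q. -/
def qint (n : ℤ) : F := (q ^ n - q ^ (-n)) / (q - q⁻¹)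

/-- Block index of an element of `Fin (m+n+p)` with respect to the partition into
three consecutive blocks of sizes `m`, `n`, `p`. -/
def blk (m n : ℕ) {N : ℕ} (a : Fin N) : ℕ :=
  if (a : ℕ) < m then 0 else if (a : ℕ) < m + n then 1 else 2

/-- Embedding of the first block `Fin m → Fin (m+n+p)`. -/
def j1 (m n p : ℕ) : Fin m → Fin (m + n + p) :=
  fun i => ⟨i, by have := i.isLt; omega⟩

/-- Embedding of the second block `Fin n → Fin (m+n+p)`. -/
def j2 (m n p : ℕ) : Fin n → Fin (m + n + p) :=
  fun i => ⟨m + i, by have := i.isLt; omega⟩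

/-- Embedding of the third block `Fin p → Fin (m+n+p)`. -/
def j3 (m n p : ℕ) : Fin p → Fin (m + n + p) :=
  fun i => ⟨m + n + i, by have := i.isLt; omega⟩

/-- The three-block Levi braiding `c_{m,n,p}`: on pairs of basis vectors indexed in the
same block it acts as the correspondingly embedded `β m`, `β n`, `β p`, and by the flip
on pairs indexed in different blocks. -/
def levi3 (m n p : ℕ) :
    V (m + n + p) ⊗[F] V (m + n + p) →ₗ[F] V (m + n + p) ⊗[F] V (m + n + p) :=
  (bVV (m + n + p)).constr F fun pr =>
    if ha1 : (pr.1 : ℕ) < m then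
      if hb1 : (pr.2 : ℕ) < m then
        TensorProduct.map (emb (j1 m n p)) (emb (j1 m n p))
          (β m (e ⟨pr.1, ha1⟩ ⊗ₜ[F] e ⟨pr.2, hb1⟩))
      else e pr.2 ⊗ₜ[F] e pr.1
    else if ha2 : (pr.1 : ℕ) < m + n then
      if hb2 : m ≤ (pr.2 : ℕ) ∧ (pr.2 : ℕ) < m + n then
        TensorProduct.map (emb (j2 m n p)) (emb (j2 m n p))
          (β n (e ⟨(pr.1 : ℕ) - m, by omega⟩ ⊗ₜ[F] e ⟨(pr.2 : ℕ) - m, by omega⟩))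
      else e pr.2 ⊗ₜ[F] e pr.1
    else
      if hb3 : m + n ≤ (pr.2 : ℕ) then
        TensorProduct.map (emb (j3 m n p)) (emb (j3 m n p))
          (β p (e ⟨(pr.1 : ℕ) - (m + n), by have := pr.1.isLt; omega⟩ ⊗ₜ[F]
                e ⟨(pr.2 : ℕ) - (m + n), by have := pr.2.isLt; omega⟩))
      else e pr.2 ⊗ₜ[F] e pr.1

/-- The projection `P_>` onto the span of basis vectors `e a ⊗ e b` with `a` and `b`
in different blocks and `a` in a strictly later block than `b`. -/
def Pgt (m n p : ℕ) :
    V (m + n + p) ⊗[F] V (m + n + p) →ₗ[F] V (m + n + p) ⊗[F] V (m + n + p) :=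
  (bVV (m + n + p)).constr F fun pr =>
    if blk m n pr.2 < blk m n pr.1 then e pr.1 ⊗ₜ[F] e pr.2 else 0

/-! Compare both sides on the basis `e a ⊗ e b`. The block embeddings are order preserving,
so the embedded `β m`, `β n`, `β p` are restrictions of `β (m + n + p)`: the two sides agree
when `a` and `b` lie in the same block. Across blocks `β` is the flip plus
`(q - q⁻¹) • e a ⊗ e b` exactly when `b < a`, and for indices in different blocks `b < a`
means that `a` lies in the later block. -/

lemma bVV_apply (N : ℕ) (i j : Fin N) : bVV N (i, j) = e i ⊗ₜ[F] e j :=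
  Module.Basis.tensorProduct_apply (bV N) (bV N) i j

lemma emb_e {k N : ℕ} (f : Fin k → Fin N) (i : Fin k) : emb f (e i) = e (f i) :=
  Module.Basis.constr_basis (bV k) F _ i

lemma β_e_tmul_e (N : ℕ) (i j : Fin N) :
    β N (e i ⊗ₜ[F] e j) =
      if i = j then q • (e i ⊗ₜ[F] e i)
      else if i < j then e j ⊗ₜ[F] e i
      else e j ⊗ₜ[F] e i + (q - q⁻¹) • (e i ⊗ₜ[F] e j) := by
  conv_lhs => rw [← bVV_apply]
  exact Module.Basis.constr_basis (bVV N) F _ (i, j)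

lemma β_e_tmul_e_of_ne {N : ℕ} {i j : Fin N} (h : i ≠ j) :
    β N (e i ⊗ₜ[F] e j) =
      e j ⊗ₜ[F] e i + if j < i then (q - q⁻¹) • (e i ⊗ₜ[F] e j) else 0 := by
  rw [β_e_tmul_e, if_neg h]
  by_cases hij : i < j
  · rw [if_pos hij, if_neg (lt_asymm hij), add_zero]
  · rw [if_neg hij, if_pos (lt_of_le_of_ne (not_lt.mp hij) (Ne.symm h))]

lemma map_emb_comp_β {k N : ℕ} {f : Fin k → Fin N} (hf : StrictMono f) :
    TensorProduct.map (emb f) (emb f) ∘ₗ β k = β N ∘ₗ TensorProduct.map (emb f) (emb f) := by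
  refine (bVV k).ext fun ⟨i, j⟩ => ?_
  simp only [LinearMap.comp_apply, bVV_apply, TensorProduct.map_tmul, emb_e, β_e_tmul_e,
    hf.injective.eq_iff, hf.lt_iff_lt]
  split_ifs <;> simp only [map_add, map_smul, TensorProduct.map_tmul, emb_e]

lemma map_emb_β_e_tmul_e {k N : ℕ} {f : Fin k → Fin N} (hf : StrictMono f) (i j : Fin k) :
    TensorProduct.map (emb f) (emb f) (β k (e i ⊗ₜ[F] e j)) = β N (e (f i) ⊗ₜ[F] e (f j)) := by
  simpa only [LinearMap.comp_apply, TensorProduct.map_tmul, emb_e] using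
    LinearMap.congr_fun (map_emb_comp_β hf) (e i ⊗ₜ[F] e j)

section Blocks

variable (m n p : ℕ)

lemma j1_strictMono : StrictMono (j1 m n p) := fun _ _ h => h

lemma j2_strictMono : StrictMono (j2 m n p) := fun _ _ h => by
  simp only [j2, Fin.lt_def] at h ⊢; omega

lemma j3_strictMono : StrictMono (j3 m n p) := fun _ _ h => by
  simp only [j3, Fin.lt_def] at h ⊢; omega

lemma blk_monotone {N : ℕ} : Monotone (blk m n : Fin N → ℕ) := fun a b h => by
  simp only [blk, Fin.le_def] at h ⊢; split_ifs <;> omega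

lemma lt_iff_blk_lt_of_blk_ne {N : ℕ} {a b : Fin N} (h : blk m n a ≠ blk m n b) :
    b < a ↔ blk m n b < blk m n a :=
  ⟨fun hba => lt_of_le_of_ne (blk_monotone m n hba.le) (Ne.symm h),
    (blk_monotone m n).reflect_lt⟩

lemma levi3_e_tmul_e_of_blk_eq {a b : Fin (m + n + p)} (h : blk m n a = blk m n b) :
    levi3 m n p (e a ⊗ₜ[F] e b) = β (m + n + p) (e a ⊗ₜ[F] e b) := by
  conv_lhs => rw [← bVV_apply, levi3, Module.Basis.constr_basis]
  dsimp only
  simp only [blk] at h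
  split_ifs at h ⊢ <;> try omega
  · rw [map_emb_β_e_tmul_e (j1_strictMono m n p)]; rfl
  · rw [map_emb_β_e_tmul_e (j2_strictMono m n p)]
    congr 3 <;> ext <;> simp only [j2] <;> omega
  · rw [map_emb_β_e_tmul_e (j3_strictMono m n p)]
    congr 3 <;> ext <;> simp only [j3] <;> omega

lemma levi3_e_tmul_e_of_blk_ne {a b : Fin (m + n + p)} (h : blk m n a ≠ blk m n b) :
    levi3 m n p (e a ⊗ₜ[F] e b) = e b ⊗ₜ[F] e a := by
  conv_lhs => rw [← bVV_apply, levi3, Module.Basis.constr_basis]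
  dsimp only
  simp only [blk] at h
  split_ifs at h ⊢ <;> first | rfl | omega

lemma Pgt_e_tmul_e (a b : Fin (m + n + p)) :
    Pgt m n p (e a ⊗ₜ[F] e b) = if blk m n b < blk m n a then e a ⊗ₜ[F] e b else 0 := by
  conv_lhs => rw [← bVV_apply]
  exact Module.Basis.constr_basis (bVV (m + n + p)) F _ (a, b)

end Blocks

/-- The three-block crossing decomposition:
`β (m+n+p) = c_{m,n,p} + (q - q⁻¹) • P_>`. -/
theorem beta_three_block_decomposition (m n p : ℕ) :
    β (m + n + p) = levi3 m n p + (q - q⁻¹) • Pgt m n p := by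
  refine (bVV (m + n + p)).ext fun ⟨a, b⟩ => ?_
  rw [bVV_apply, LinearMap.add_apply, LinearMap.smul_apply, Pgt_e_tmul_e]
  by_cases h : blk m n a = blk m n b
  · rw [levi3_e_tmul_e_of_blk_eq m n p h, if_neg (h ▸ lt_irrefl _), smul_zero, add_zero]
  · have hab : a ≠ b := fun hab => h (congrArg _ hab)
    rw [levi3_e_tmul_e_of_blk_ne m n p h, β_e_tmul_e_of_ne hab]
    simp only [lt_iff_blk_lt_of_blk_ne m n h]
    split_ifs <;> simp only [smul_zero]

end
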